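/- arXiv:1507.03536 — 3 statements merged into one kernel-verified Lean document; each statement's English description precedes it below -/
import Mathlib

section
/- For every p > 2 there exists a constant C > 0, depending only on p and α, such that for all entire functions g, ψ on ℂ and every w ∈ ℂ, ∫_ℂ |k_w(ψ(ζ))|^p Q_g(ζ)^p dm(ζ) ≤ C ( ∫_ℂ |k_w(ψ(ζ))|² Q_g(ζ)² dm(ζ) )^{p/2}. -/
open MeasureTheory Complex
open scoped ENNReal

/-- Normalized reproducing kernel of the Fock space `F_α²`:
`k_w(u) = exp(α u w̄ − (α/2)|w|²)`. -/
noncomputable def fockK (α : ℝ) (w u : ℂ) : ℂ :=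
  Complex.exp (α * u * (starRingEnd ℂ) w - (α / 2 : ℝ) * (‖w‖ : ℂ) ^ 2)

/-- `Q_g(z) = |g(z)| e^{−(α/2)|z|²} (1+|z|)^{−1}`. -/
noncomputable def Qfun (α : ℝ) (g : ℂ → ℂ) (z : ℂ) : ℝ :=
  ‖g z‖ * Real.exp (-(α / 2) * ‖z‖ ^ 2) / (1 + ‖z‖)

/-! With `h = (k_w ∘ ψ) g`, which is entire, both integrands are powers of `φ = Q_h²`. This `φ`
satisfies a local sub-mean-value inequality `φ z ≤ C ∫_{D(z,1)} φ`: multiplying `h²` by the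
holomorphic factor `exp (α (|z|² - 2 ζ z̄))` turns the Gaussian weight `e^{-α|ζ|²}` into
`e^{-α|ζ|²} e^{α|ζ-z|²}`, so the area mean-value inequality for holomorphic functions applies with a
loss of at most `e^α` on the unit disc, and `1 + |ζ| ≤ 2 (1 + |z|)` handles the remaining weight.
Hence `φ ≤ C ∫ φ` everywhere, and `∫ φ^{p/2} ≤ (C ∫ φ)^{p/2-1} ∫ φ`. -/

open Metric Real Set
open scoped ComplexConjugate

section MeanValue

variable {E : Type*} [NormedAddCommGroup E] [NormedSpace ℂ E] [CompleteSpace E] {f : ℂ → E}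

theorem ofReal_two_pi_mul_enorm_le_lintegral_circleMap (hf : Differentiable ℂ f) (c : ℂ)
    (r : ℝ) : ENNReal.ofReal (2 * π) * ‖f c‖ₑ ≤ ∫⁻ θ in Ioo (-π) π, ‖f (circleMap c r θ)‖ₑ := by
  have hmean : f c = (2 * π)⁻¹ • ∫ θ in (-π)..π, f (circleMap c r θ) := by
    have hshift := ((periodic_circleMap c r).comp f).intervalIntegral_add_eq 0 (-π)
    rw [zero_add, show -π + 2 * π = π by ring] at hshift
    rw [← (hf.diffContOnCl (s := ball c |r|)).circleAverage, circleAverage_def]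
    exact congrArg _ hshift
  calc ENNReal.ofReal (2 * π) * ‖f c‖ₑ
      = ‖∫ θ in (-π)..π, f (circleMap c r θ)‖ₑ := by
        rw [hmean, enorm_smul, enorm_of_nonneg (by positivity), ← mul_assoc,
          ← ENNReal.ofReal_mul (by positivity), mul_inv_cancel₀ (by positivity),
          ENNReal.ofReal_one, one_mul]
    _ ≤ ∫⁻ θ in Ioc (-π) π, ‖f (circleMap c r θ)‖ₑ := by
        rw [intervalIntegral.integral_of_le (by linarith [pi_pos])]
        exact enorm_integral_le_lintegral_enorm _
    _ = ∫⁻ θ in Ioo (-π) π, ‖f (circleMap c r θ)‖ₑ := setLIntegral_congr Ioo_ae_eq_Ioc.symm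

theorem setLIntegral_ofReal_Ioo_zero (r : ℝ) (hr : 0 ≤ r) :
    ∫⁻ s in Ioo 0 r, ENNReal.ofReal s = ENNReal.ofReal (r ^ 2 / 2) := by
  rw [← ofReal_integral_eq_lintegral_ofReal, integral_Ioc_eq_integral_Ioo.symm,
    ← intervalIntegral.integral_of_le hr, integral_id]
  · norm_num
  · exact continuous_id.integrableOn_Icc.mono_set Ioo_subset_Icc_self
  · exact (ae_restrict_iff' measurableSet_Ioo).2 (ae_of_all _ fun s hs => hs.1.le)

theorem circleMap_eq_add_polarCoord_symm (c : ℂ) (s θ : ℝ) :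
    circleMap c s θ = c + Complex.polarCoord.symm (s, θ) := by
  simp [circleMap, Complex.exp_mul_I]

theorem ofReal_pi_mul_sq_mul_enorm_le_setLIntegral_ball (hf : Differentiable ℂ f) (c : ℂ)
    {r : ℝ} (hr : 0 ≤ r) :
    ENNReal.ofReal (π * r ^ 2) * ‖f c‖ₑ ≤ ∫⁻ ζ in ball c r, ‖f ζ‖ₑ := by
  set F : ℂ → ℝ≥0∞ := (ball c r).indicator (‖f ·‖ₑ)
  set S : Set (ℝ × ℝ) := Ioo 0 r ×ˢ Ioo (-π) π
  have hmeas : Measurable fun p : ℝ × ℝ => ENNReal.ofReal p.1 * ‖f (circleMap c p.1 p.2)‖ₑ := by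
    have : Continuous fun p : ℝ × ℝ => circleMap c p.1 p.2 := by unfold circleMap; fun_prop
    exact (ENNReal.measurable_ofReal.comp measurable_fst).mul
      (hf.continuous.comp this).enorm.measurable
  have hpolar : EqOn (fun p : ℝ × ℝ => ENNReal.ofReal p.1 * ‖f (circleMap c p.1 p.2)‖ₑ)
      (fun p => ENNReal.ofReal p.1 • F (c + Complex.polarCoord.symm p)) S := by
    rintro ⟨s, θ⟩ ⟨hs, -⟩
    have hmem : c + Complex.polarCoord.symm (s, θ) ∈ ball c r := by
      simpa [abs_of_pos hs.1] using hs.2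
    simp only [F, indicator_of_mem hmem, smul_eq_mul, circleMap_eq_add_polarCoord_symm]
  calc ENNReal.ofReal (π * r ^ 2) * ‖f c‖ₑ
      = ∫⁻ s in Ioo 0 r, ENNReal.ofReal s * (ENNReal.ofReal (2 * π) * ‖f c‖ₑ) := by
        rw [lintegral_mul_const _ ENNReal.measurable_ofReal, setLIntegral_ofReal_Ioo_zero r hr,
          ← mul_assoc, ← ENNReal.ofReal_mul (by positivity)]
        ring_nf
    _ ≤ ∫⁻ s in Ioo 0 r, ∫⁻ θ in Ioo (-π) π, ENNReal.ofReal s * ‖f (circleMap c s θ)‖ₑ := by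
        refine lintegral_mono fun s => ?_
        rw [lintegral_const_mul _ ?_]
        · gcongr
          exact ofReal_two_pi_mul_enorm_le_lintegral_circleMap hf c s
        · exact (hf.continuous.comp (continuous_circleMap c s)).enorm.measurable
    _ = ∫⁻ p in S, ENNReal.ofReal p.1 * ‖f (circleMap c p.1 p.2)‖ₑ := by
        rw [Measure.volume_eq_prod, ← Measure.prod_restrict, lintegral_prod _ hmeas.aemeasurable]
    _ = ∫⁻ p in S, ENNReal.ofReal p.1 • F (c + Complex.polarCoord.symm p) :=
        setLIntegral_congr_fun (measurableSet_Ioo.prod measurableSet_Ioo) hpolar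
    _ ≤ ∫⁻ p in polarCoord.target, ENNReal.ofReal p.1 • F (c + Complex.polarCoord.symm p) :=
        lintegral_mono_set (prod_mono Ioo_subset_Ioi_self subset_rfl)
    _ = ∫⁻ ζ in ball c r, ‖f ζ‖ₑ := by
        rw [Complex.lintegral_comp_polarCoord_symm (fun ζ => F (c + ζ)),
          lintegral_add_left_eq_self, lintegral_indicator measurableSet_ball]

end MeanValue

theorem lintegral_rpow_le_of_le_mul_lintegral {X : Type*} [MeasurableSpace X] {μ : Measure X}
    {f : X → ℝ≥0∞} (hfm : AEMeasurable f μ) {c : ℝ≥0∞} (hf : ∀ x, f x ≤ c * ∫⁻ y, f y ∂μ)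
    {q : ℝ} (hq : 1 ≤ q) :
    ∫⁻ x, f x ^ q ∂μ ≤ c ^ (q - 1) * (∫⁻ x, f x ∂μ) ^ q := by
  have hsplit : ∀ a : ℝ≥0∞, a ^ q = a ^ (q - 1) * a := fun a => by
    conv_lhs => rw [← sub_add_cancel q 1]
    rw [ENNReal.rpow_add_of_nonneg _ _ (by linarith) zero_le_one, ENNReal.rpow_one]
  calc ∫⁻ x, f x ^ q ∂μ
      ≤ ∫⁻ x, (c * ∫⁻ y, f y ∂μ) ^ (q - 1) * f x ∂μ := by
        refine lintegral_mono fun x => ?_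
        rw [hsplit]
        gcongr
        exact hf x
    _ = c ^ (q - 1) * (∫⁻ x, f x ∂μ) ^ q := by
        rw [lintegral_const_mul'' _ hfm, ENNReal.mul_rpow_of_nonneg _ _ (by linarith), mul_assoc,
          ← hsplit]

theorem norm_cexp_mul_sq_sub_two_mul_conj (α : ℝ) (z ζ : ℂ) :
    ‖cexp (α * ((‖z‖ : ℂ) ^ 2 - 2 * ζ * conj z))‖ = rexp (α * (‖ζ - z‖ ^ 2 - ‖ζ‖ ^ 2)) := by
  have hsub := Complex.normSq_sub ζ z
  simp only [Complex.normSq_eq_norm_sq] at hsub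
  rw [Complex.norm_exp, hsub]
  congr 1
  simp only [Complex.mul_re, Complex.mul_im, Complex.sub_re, Complex.sub_im, Complex.ofReal_re,
    Complex.ofReal_im, ← Complex.ofReal_pow, Complex.re_ofNat, Complex.im_ofNat]
  ring

theorem ofReal_sq_norm_mul_exp_le_setLIntegral_ball {α : ℝ} (hα : 0 ≤ α) {h : ℂ → ℂ}
    (hh : Differentiable ℂ h) (z : ℂ) {r : ℝ} (hr : 0 < r) :
    ENNReal.ofReal (‖h z‖ ^ 2 * rexp (-α * ‖z‖ ^ 2)) ≤
      ENNReal.ofReal (rexp (α * r ^ 2) / (π * r ^ 2)) *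
        ∫⁻ ζ in ball z r, ENNReal.ofReal (‖h ζ‖ ^ 2 * rexp (-α * ‖ζ‖ ^ 2)) := by
  set A : ℂ → ℝ := fun ζ => ‖h ζ‖ ^ 2 * rexp (-α * ‖ζ‖ ^ 2)
  set G : ℂ → ℂ := fun ζ => h ζ ^ 2 * cexp (α * ((‖z‖ : ℂ) ^ 2 - 2 * ζ * conj z))
  have hG : Differentiable ℂ G := by fun_prop
  have hnormG : ∀ ζ, ‖G ζ‖ₑ = ENNReal.ofReal (A ζ * rexp (α * ‖ζ - z‖ ^ 2)) := fun ζ => by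
    rw [← ofReal_norm, norm_mul, norm_pow, norm_cexp_mul_sq_sub_two_mul_conj,
      mul_assoc, ← Real.exp_add]
    ring_nf
  have hπr : ENNReal.ofReal (π * r ^ 2) ≠ 0 := by
    rw [ne_eq, ENNReal.ofReal_eq_zero, not_le]; positivity
  rw [← ENNReal.mul_le_mul_iff_right hπr ENNReal.ofReal_ne_top, ← mul_assoc,
    ← ENNReal.ofReal_mul (q := rexp (α * r ^ 2) / (π * r ^ 2)) (by positivity),
    mul_div_cancel₀ _ (by positivity)]
  calc ENNReal.ofReal (π * r ^ 2) * ENNReal.ofReal (A z)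
      = ENNReal.ofReal (π * r ^ 2) * ‖G z‖ₑ := by simp [hnormG]
    _ ≤ ∫⁻ ζ in ball z r, ‖G ζ‖ₑ := ofReal_pi_mul_sq_mul_enorm_le_setLIntegral_ball hG z hr.le
    _ ≤ ∫⁻ ζ in ball z r, ENNReal.ofReal (rexp (α * r ^ 2)) * ENNReal.ofReal (A ζ) := by
        refine setLIntegral_mono' measurableSet_ball fun ζ hζ => ?_
        rw [hnormG, ← ENNReal.ofReal_mul (Real.exp_pos _).le, mul_comm]
        have hdist : ‖ζ - z‖ ^ 2 ≤ r ^ 2 := by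
          rw [mem_ball, dist_eq_norm] at hζ
          exact pow_le_pow_left₀ (norm_nonneg _) hζ.le 2
        gcongr
    _ = ENNReal.ofReal (rexp (α * r ^ 2)) * ∫⁻ ζ in ball z r, ENNReal.ofReal (A ζ) :=
        lintegral_const_mul' _ _ ENNReal.ofReal_ne_top

theorem Qfun_sq (α : ℝ) (g : ℂ → ℂ) (ζ : ℂ) :
    Qfun α g ζ ^ 2 = ((1 + ‖ζ‖) ^ 2)⁻¹ * (‖g ζ‖ ^ 2 * rexp (-α * ‖ζ‖ ^ 2)) := by
  rw [Qfun, div_pow, mul_pow, ← Real.exp_nat_mul]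
  field_simp
  ring_nf

theorem Qfun_nonneg (α : ℝ) (g : ℂ → ℂ) (ζ : ℂ) : 0 ≤ Qfun α g ζ := by
  unfold Qfun
  positivity

theorem continuous_Qfun (α : ℝ) {g : ℂ → ℂ} (hg : Continuous g) : Continuous (Qfun α g) := by
  unfold Qfun
  exact Continuous.div (by fun_prop) (by fun_prop) fun ζ => by positivity

theorem ofReal_Qfun_sq_le_setLIntegral_ball {α : ℝ} (hα : 0 ≤ α) {h : ℂ → ℂ}
    (hh : Differentiable ℂ h) (z : ℂ) :
    ENNReal.ofReal (Qfun α h z ^ 2) ≤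
      ENNReal.ofReal (4 * rexp α / π) * ∫⁻ ζ in ball z 1, ENNReal.ofReal (Qfun α h ζ ^ 2) := by
  set A : ℂ → ℝ := fun ζ => ‖h ζ‖ ^ 2 * rexp (-α * ‖ζ‖ ^ 2)
  have hA : ∀ ζ, 0 ≤ A ζ := fun ζ => by positivity
  have hlocal := ofReal_sq_norm_mul_exp_le_setLIntegral_ball hα hh z one_pos
  simp only [one_pow, mul_one] at hlocal
  have hweight : ∀ ζ ∈ ball z 1, ((1 + ‖z‖) ^ 2)⁻¹ ≤ 4 * ((1 + ‖ζ‖) ^ 2)⁻¹ := by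
    intro ζ hζ
    rw [mem_ball, dist_eq_norm] at hζ
    have hle : 1 + ‖ζ‖ ≤ 2 * (1 + ‖z‖) := by
      linarith [norm_le_norm_add_norm_sub' ζ z, norm_nonneg z]
    calc ((1 + ‖z‖) ^ 2)⁻¹ = 4 * ((2 * (1 + ‖z‖)) ^ 2)⁻¹ := by
          rw [mul_pow, mul_inv, ← mul_assoc]; norm_num
      _ ≤ 4 * ((1 + ‖ζ‖) ^ 2)⁻¹ := by gcongr
  calc ENNReal.ofReal (Qfun α h z ^ 2)
      = ENNReal.ofReal ((1 + ‖z‖) ^ 2)⁻¹ * ENNReal.ofReal (A z) := by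
        rw [Qfun_sq, ENNReal.ofReal_mul (by positivity)]
    _ ≤ ENNReal.ofReal ((1 + ‖z‖) ^ 2)⁻¹ *
          (ENNReal.ofReal (rexp α / π) * ∫⁻ ζ in ball z 1, ENNReal.ofReal (A ζ)) :=
        mul_le_mul_of_nonneg_left hlocal (by positivity)
    _ = ENNReal.ofReal (rexp α / π) *
          ∫⁻ ζ in ball z 1, ENNReal.ofReal (((1 + ‖z‖) ^ 2)⁻¹ * A ζ) := by
        simp_rw [ENNReal.ofReal_mul (inv_nonneg.2 (sq_nonneg (1 + ‖z‖)))]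
        rw [lintegral_const_mul' _ _ ENNReal.ofReal_ne_top]
        ring
    _ ≤ ENNReal.ofReal (rexp α / π) *
          ∫⁻ ζ in ball z 1, ENNReal.ofReal 4 * ENNReal.ofReal (Qfun α h ζ ^ 2) := by
        refine mul_le_mul_of_nonneg_left
          (setLIntegral_mono' measurableSet_ball fun ζ hζ => ?_) (by positivity)
        rw [Qfun_sq, ← ENNReal.ofReal_mul (by norm_num)]
        exact ENNReal.ofReal_le_ofReal
          ((mul_le_mul_of_nonneg_right (hweight ζ hζ) (hA ζ)).trans_eq (mul_assoc _ _ _))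
    _ = ENNReal.ofReal (4 * rexp α / π) * ∫⁻ ζ in ball z 1, ENNReal.ofReal (Qfun α h ζ ^ 2) := by
        rw [lintegral_const_mul' _ _ ENNReal.ofReal_ne_top, ← mul_assoc,
          ← ENNReal.ofReal_mul (by positivity)]
        ring_nf

theorem differentiable_fockK (α : ℝ) (w : ℂ) : Differentiable ℂ (fockK α w) := by
  unfold fockK
  fun_prop

theorem norm_mul_Qfun (α : ℝ) (u g : ℂ → ℂ) (ζ : ℂ) :
    ‖u ζ‖ * Qfun α g ζ = Qfun α (fun ζ => u ζ * g ζ) ζ := by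
  simp only [Qfun, norm_mul, mul_assoc, mul_div_assoc]

theorem p_integral_le_square_integral (α : ℝ) (hα : 0 < α) (p : ℝ) (hp : 2 < p) :
    ∃ C : ℝ, 0 < C ∧ ∀ g ψ : ℂ → ℂ,
      Differentiable ℂ g → Differentiable ℂ ψ → ∀ w : ℂ,
      (∫⁻ ζ : ℂ, ENNReal.ofReal
          (‖fockK α w (ψ ζ)‖ ^ p * Qfun α g ζ ^ p)) ≤
        ENNReal.ofReal C *
          (∫⁻ ζ : ℂ, ENNReal.ofReal
              (‖fockK α w (ψ ζ)‖ ^ 2 * Qfun α g ζ ^ 2)) ^ (p / 2) := by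
  refine ⟨(4 * rexp α / π) ^ (p / 2 - 1), by positivity, fun g ψ hg hψ w => ?_⟩
  set h : ℂ → ℂ := fun ζ => fockK α w (ψ ζ) * g ζ
  have hh : Differentiable ℂ h := ((differentiable_fockK α w).comp hψ).mul hg
  have hpow : ∀ (q : ℝ) ζ, ‖fockK α w (ψ ζ)‖ ^ q * Qfun α g ζ ^ q = Qfun α h ζ ^ q :=
    fun q ζ => by
      rw [← Real.mul_rpow (norm_nonneg _) (Qfun_nonneg α g ζ),
        norm_mul_Qfun α (fun ζ => fockK α w (ψ ζ))]
  have hsq : ∀ ζ, ‖fockK α w (ψ ζ)‖ ^ 2 * Qfun α g ζ ^ 2 = Qfun α h ζ ^ 2 := fun ζ => by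
    rw [← mul_pow, norm_mul_Qfun α (fun ζ => fockK α w (ψ ζ))]
  have key := lintegral_rpow_le_of_le_mul_lintegral (μ := volume)
    (f := fun ζ => ENNReal.ofReal (Qfun α h ζ ^ 2))
    ((continuous_Qfun α hh.continuous).pow 2).measurable.ennreal_ofReal.aemeasurable
    (fun z => (ofReal_Qfun_sq_le_setLIntegral_ball hα.le hh z).trans
      (by gcongr; exact Measure.restrict_le_self)) (q := p / 2) (by linarith)
  have hrpow : ∀ ζ, ENNReal.ofReal (Qfun α h ζ ^ p) = ENNReal.ofReal (Qfun α h ζ ^ 2) ^ (p / 2) :=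
    fun ζ => by
      rw [ENNReal.ofReal_rpow_of_nonneg (by positivity) (by linarith),
        ← Real.rpow_natCast_mul (Qfun_nonneg α h ζ), Nat.cast_ofNat, mul_div_cancel₀ _ two_ne_zero]
  simp_rw [hpow, hsq, hrpow]
  rwa [← ENNReal.ofReal_rpow_of_nonneg (by positivity) (by linarith)]
end

section
/- Let α > 0, let g be an entire function on ℂ that is not identically zero, and let ψ : ℂ → ℂ be a polynomial. If sup_{z ∈ ℂ} (|g(z)ψ(z)| / (1+|z|)) e^{(α/2)(|ψ(z)|² − |z|²)} < ∞, then there exist a, b ∈ ℂ with |a| ≤ 1 such that ψ(z) = a z + b for all z ∈ ℂ. -/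
/-! If `ψ` is not of the form `a z + b` with `‖a‖ ≤ 1`, write `ψ = z Q(z) + ψ(0)`: either `Q` is
nonconstant, so `‖Q‖ → ∞`, or `Q` is a constant of norm `> 1`. Either way `‖ψ z‖ ≥ ρ ‖z‖` near
infinity for some `ρ > 1`, so the weight `exp (α/2 (‖ψ‖² - ‖z‖²))` grows like `exp (c ‖z‖²)` and
beats `1 + ‖z‖`. Hence `g → 0` at infinity, and `g = 0` by Liouville's theorem. -/

open Complex Filter Topology Polynomial

namespace Polynomial

variable {𝕜 : Type*} [NormedField 𝕜]

theorem exists_one_lt_le_norm_eval (Q : 𝕜[X]) (hQ : ∀ a, ‖a‖ ≤ 1 → Q ≠ C a) :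
    ∃ ρ > 1, ∀ᶠ z in Bornology.cobounded 𝕜, ρ ≤ ‖Q.eval z‖ := by
  by_cases hdeg : 0 < Q.degree
  · exact ⟨2, one_lt_two,
      (Q.tendsto_norm_atTop hdeg tendsto_norm_cobounded_atTop).eventually_ge_atTop 2⟩
  · have hQC := eq_C_of_degree_le_zero (not_lt.mp hdeg)
    refine ⟨‖Q.coeff 0‖, lt_of_not_ge fun h => hQ _ h hQC, .of_forall fun z => ?_⟩
    conv_rhs => rw [hQC, eval_C]

theorem exists_one_lt_mul_norm_le_norm_eval (P : 𝕜[X])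
    (hP : ∀ a b, ‖a‖ ≤ 1 → P ≠ C a * X + C b) :
    ∃ ρ > 1, ∀ᶠ z in Bornology.cobounded 𝕜, ρ * ‖z‖ ≤ ‖P.eval z‖ := by
  obtain ⟨ρ, hρ, hQ⟩ := P.divX.exists_one_lt_le_norm_eval fun a ha hPa =>
    hP a (P.coeff 0) ha ((X_mul_divX_add P).symm.trans (by rw [hPa, mul_comm]))
  refine ⟨(ρ + 1) / 2, by linarith, ?_⟩
  filter_upwards [hQ, tendsto_norm_cobounded_atTop.eventually_ge_atTop
    (2 * ‖P.coeff 0‖ / (ρ - 1))] with z hρQ hz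
  have hc : 2 * ‖P.coeff 0‖ ≤ (ρ - 1) * ‖z‖ := by
    rw [div_le_iff₀ (by linarith)] at hz; linarith
  calc (ρ + 1) / 2 * ‖z‖ ≤ ‖z‖ * ‖P.divX.eval z‖ - ‖P.coeff 0‖ := by
        nlinarith [norm_nonneg z]
    _ ≤ ‖z * P.divX.eval z + P.coeff 0‖ := by
        rw [← norm_mul]; exact norm_sub_le_norm_add _ _
    _ = ‖P.eval z‖ := by
        conv_rhs => rw [← X_mul_divX_add P, eval_add, eval_mul, eval_X, eval_C]

end Polynomial

theorem tendsto_one_add_mul_exp_neg_mul_sq_atTop {b : ℝ} (hb : 0 < b) :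
    Tendsto (fun r : ℝ => (1 + r) * Real.exp (-b * r ^ 2)) atTop (𝓝 0) := by
  have hlin : Tendsto (fun r : ℝ => (1 + r) * Real.exp (-r)) atTop (𝓝 0) := by
    simpa [add_mul] using Real.tendsto_exp_neg_atTop_nhds_zero.add
      (Real.tendsto_pow_mul_exp_neg_atTop_nhds_zero 1)
  refine squeeze_zero' ?_ ?_ hlin
  · filter_upwards [eventually_ge_atTop 0] with r hr
    positivity
  · filter_upwards [eventually_ge_atTop b⁻¹] with r hr
    have hbr : 1 ≤ b * r := by rwa [inv_le_iff_one_le_mul₀' hb] at hr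
    have hr0 : 0 ≤ r := (inv_pos.2 hb).le.trans hr
    gcongr
    nlinarith [mul_le_mul_of_nonneg_left hbr hr0]

theorem tendsto_zero_of_norm_mul_div_mul_exp_le {E 𝕜 : Type*} [SeminormedAddCommGroup E]
    [NormedDivisionRing 𝕜] {g ψ : E → 𝕜} {α ρ M : ℝ} (hα : 0 < α) (hρ : 1 < ρ)
    (hψ : ∀ᶠ z in Bornology.cobounded E, ρ * ‖z‖ ≤ ‖ψ z‖)
    (hM : ∀ z, ‖g z * ψ z‖ / (1 + ‖z‖) * Real.exp (α / 2 * (‖ψ z‖ ^ 2 - ‖z‖ ^ 2)) ≤ M) :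
    Tendsto g (Bornology.cobounded E) (𝓝 0) := by
  have hb : 0 < α / 2 * (ρ ^ 2 - 1) := mul_pos (half_pos hα) (by nlinarith)
  have hM0 : 0 ≤ M := (by positivity : (0 : ℝ) ≤ _).trans (hM 0)
  have hdom := ((tendsto_one_add_mul_exp_neg_mul_sq_atTop hb).comp
    (tendsto_norm_cobounded_atTop (E := E))).const_mul M
  rw [mul_zero] at hdom
  refine squeeze_zero_norm' ?_ hdom
  filter_upwards [hψ, tendsto_norm_cobounded_atTop.eventually_ge_atTop 1] with z hρz hz
  set r := ‖z‖
  set t := α / 2 * (‖ψ z‖ ^ 2 - r ^ 2)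
  have hψ1 : 1 ≤ ‖ψ z‖ := by nlinarith
  have ht : α / 2 * (ρ ^ 2 - 1) * r ^ 2 ≤ t := by
    have hsq : (ρ * r) ^ 2 ≤ ‖ψ z‖ ^ 2 := by gcongr
    have := mul_le_mul_of_nonneg_left hsq (half_pos hα).le
    simp only [t]
    linarith
  calc ‖g z‖ ≤ ‖g z * ψ z‖ := by
        rw [norm_mul]; exact le_mul_of_one_le_right (norm_nonneg _) hψ1
    _ = ‖g z * ψ z‖ / (1 + r) * Real.exp t * ((1 + r) * Real.exp (-t)) := by
        rw [Real.exp_neg]; field_simp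
    _ ≤ M * ((1 + r) * Real.exp (-t)) := by gcongr; exact hM z
    _ ≤ M * ((1 + r) * Real.exp (-(α / 2 * (ρ ^ 2 - 1)) * r ^ 2)) := by
        gcongr; linarith

theorem psi_linear_of_sup_finite (α : ℝ) (hα : 0 < α) (g ψ : ℂ → ℂ)
    (hg : Differentiable ℂ g) (hg0 : ∃ z : ℂ, g z ≠ 0)
    (hψ : ∃ P : Polynomial ℂ, ∀ z : ℂ, ψ z = P.eval z)
    (hsup : ∃ M : ℝ, ∀ z : ℂ,
      ‖g z * ψ z‖ / (1 + ‖z‖) *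
        Real.exp (α / 2 * (‖ψ z‖ ^ 2 - ‖z‖ ^ 2)) ≤ M) :
    ∃ a b : ℂ, ‖a‖ ≤ 1 ∧ ∀ z : ℂ, ψ z = a * z + b := by
  obtain ⟨P, hP⟩ := hψ
  obtain ⟨M, hM⟩ := hsup
  obtain ⟨z₀, hz₀⟩ := hg0
  by_contra hlin
  have hP_nonlin : ∀ a b, ‖a‖ ≤ 1 → P ≠ C a * X + C b := by
    rintro a b ha rfl
    exact hlin ⟨a, b, ha, fun z => by simp [hP]⟩
  obtain ⟨ρ, hρ, hgrowth⟩ := P.exists_one_lt_mul_norm_le_norm_eval hP_nonlin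
  have hdecay : Tendsto g (cocompact ℂ) (𝓝 0) := by
    rw [← Metric.cobounded_eq_cocompact]
    exact tendsto_zero_of_norm_mul_div_mul_exp_le hα hρ (by simpa only [hP] using hgrowth) hM
  exact hz₀ (hg.apply_eq_of_tendsto_cocompact z₀ hdecay)
end

section
/- For every 0 < p < ∞ there exist constants c, C > 0, depending only on p and α, such that for all entire functions g, ψ on ℂ, c · J ≤ ∫_ℂ ∫_ℂ |w|^p |k_w(ψ(ζ))|^p Q_g(ζ)^p dm(ζ) dm(w) ≤ C · J, where J = ∫_ℂ |g(ζ)|^p (1+|ψ(ζ)|)^p (1+|ζ|)^{−p} e^{(pα/2)(|ψ(ζ)|² − |ζ|²)} dm(ζ). -/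
/-!
With `β = pα/2` one has `|k_w(u)|^p = e^{β|u|²} e^{-β|w-u|²}`, so by Tonelli and the translation
`w = v + u` the inner `w`-integral is `e^{β|u|²} Φ(u)` with `Φ(u) = ∫ |v+u|^p e^{-β|v|²} dm(v)` and
`u = ψ(ζ)`, while `J` has integrand `e^{β|u|²} (1+|u|)^p Q_g(ζ)^p`. Everything thus reduces to
`Φ(u) ≍ (1+|u|)^p`. The upper bound follows from `|v+u| ≤ (1+|u|)(1+|v|)` and the integrability of
`(1+|v|)^p e^{-β|v|²}`; for the lower bound integrate over the unit ball around the point of norm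
`2` in the direction of `u`, on which `|v+u| ≥ 1+|u|` and `|v| ≤ 3`.
-/

open MeasureTheory Complex
open scoped ENNReal

open Metric

section GaussianMoment

variable {E : Type*} [NormedAddCommGroup E]

theorem exists_norm_eq_and_norm_add_eq [NormedSpace ℝ E] [Nontrivial E] (u : E) {r : ℝ}
    (hr : 0 ≤ r) :
    ∃ c : E, ‖c‖ = r ∧ ‖c + u‖ = r + ‖u‖ := by
  rcases eq_or_ne u 0 with rfl | hu
  · obtain ⟨c, hc⟩ := exists_norm_eq E hr
    exact ⟨c, hc, by simp [hc]⟩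
  · have hc : ‖(r / ‖u‖) • u‖ = r := by
      rw [norm_smul, Real.norm_of_nonneg (by positivity), div_mul_cancel₀ _ (norm_ne_zero_iff.2 hu)]
    refine ⟨(r / ‖u‖) • u, hc, ?_⟩
    rw [(SameRay.sameRay_nonneg_smul_left u (by positivity : 0 ≤ r / ‖u‖)).norm_add, hc]

theorem one_add_rpow_mul_exp_neg_mul_sq_le {s β t : ℝ} (hs : 0 ≤ s) (hβ : 0 < β) (ht : 0 ≤ t) :
    (1 + t) ^ s * Real.exp (-β * t ^ 2) ≤ Real.exp (s ^ 2 / (4 * β)) := by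
  calc (1 + t) ^ s * Real.exp (-β * t ^ 2)
      ≤ Real.exp t ^ s * Real.exp (-β * t ^ 2) := by
        gcongr
        rw [add_comm]
        exact Real.add_one_le_exp t
    _ = Real.exp (s * t - β * t ^ 2) := by
        rw [← Real.exp_mul, ← Real.exp_add]; ring_nf
    _ ≤ Real.exp (s ^ 2 / (4 * β)) := by
        gcongr
        rw [le_div_iff₀ (by positivity)]
        nlinarith [sq_nonneg (2 * β * t - s)]

variable [MeasurableSpace E] (μ : Measure E)

noncomputable def shiftedGaussianMoment (p β : ℝ) (u : E) : ℝ≥0∞ :=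
  ∫⁻ v, ENNReal.ofReal (‖v + u‖ ^ p * Real.exp (-β * ‖v‖ ^ 2)) ∂μ

theorem shiftedGaussianMoment_le {p : ℝ} (hp : 0 ≤ p) (β : ℝ) (u : E) :
    shiftedGaussianMoment μ p β u ≤
      (∫⁻ v, ENNReal.ofReal ((1 + ‖v‖) ^ p * Real.exp (-β * ‖v‖ ^ 2)) ∂μ) *
        ENNReal.ofReal ((1 + ‖u‖) ^ p) := by
  rw [shiftedGaussianMoment, ← lintegral_mul_const' _ _ ENNReal.ofReal_ne_top]
  refine lintegral_mono fun v => ?_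
  rw [← ENNReal.ofReal_mul (by positivity)]
  refine ENNReal.ofReal_le_ofReal ?_
  have hvu : ‖v + u‖ ≤ (1 + ‖v‖) * (1 + ‖u‖) := by
    nlinarith [norm_add_le v u, norm_nonneg v, norm_nonneg u]
  calc ‖v + u‖ ^ p * Real.exp (-β * ‖v‖ ^ 2)
      ≤ ((1 + ‖v‖) * (1 + ‖u‖)) ^ p * Real.exp (-β * ‖v‖ ^ 2) := by gcongr
    _ = _ := by rw [Real.mul_rpow (by positivity) (by positivity)]; ring

theorem le_shiftedGaussianMoment [NormedSpace ℝ E] [Nontrivial E] [BorelSpace E]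
    [μ.IsAddHaarMeasure] {p β : ℝ} (hp : 0 ≤ p) (hβ : 0 ≤ β) (u : E) :
    ENNReal.ofReal (Real.exp (-β * 9)) * μ (closedBall 0 1) * ENNReal.ofReal ((1 + ‖u‖) ^ p) ≤
      shiftedGaussianMoment μ p β u := by
  obtain ⟨c, hc, hcu⟩ := exists_norm_eq_and_norm_add_eq u zero_le_two
  have hball : ∀ v ∈ closedBall c 1,
      ENNReal.ofReal (Real.exp (-β * 9) * (1 + ‖u‖) ^ p) ≤
        ENNReal.ofReal (‖v + u‖ ^ p * Real.exp (-β * ‖v‖ ^ 2)) := by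
    intro v hv
    rw [mem_closedBall, dist_eq_norm] at hv
    have hvu : 1 + ‖u‖ ≤ ‖v + u‖ := by
      have := norm_add_le (c - v) (v + u)
      rw [show c - v + (v + u) = c + u by abel, norm_sub_rev] at this
      linarith
    have hv3 : ‖v‖ ^ 2 ≤ 9 := by
      have := norm_add_le c (v - c)
      rw [add_sub_cancel] at this
      nlinarith [norm_nonneg v]
    refine ENNReal.ofReal_le_ofReal ?_
    rw [mul_comm]
    exact mul_le_mul (Real.rpow_le_rpow (by positivity) hvu hp) (Real.exp_le_exp.2 (by nlinarith))
      (by positivity) (by positivity)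
  calc ENNReal.ofReal (Real.exp (-β * 9)) * μ (closedBall 0 1) * ENNReal.ofReal ((1 + ‖u‖) ^ p)
      = ∫⁻ v, (closedBall c 1).indicator
          (fun _ => ENNReal.ofReal (Real.exp (-β * 9) * (1 + ‖u‖) ^ p)) v ∂μ := by
        rw [lintegral_indicator_const measurableSet_closedBall,
          Measure.addHaar_closedBall_center μ c, ENNReal.ofReal_mul (Real.exp_nonneg _)]
        ring
    _ ≤ shiftedGaussianMoment μ p β u := by
        refine lintegral_mono fun v => ?_
        by_cases hv : v ∈ closedBall c 1
        · rw [Set.indicator_of_mem hv]; exact hball v hv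
        · rw [Set.indicator_of_notMem hv]; exact bot_le

theorem lintegral_one_add_norm_rpow_mul_exp_neg_mul_sq_lt_top [NormedSpace ℝ E]
    [FiniteDimensional ℝ E] [BorelSpace E] [μ.IsAddHaarMeasure] {p β : ℝ} (hp : 0 ≤ p)
    (hβ : 0 < β) :
    ∫⁻ v, ENNReal.ofReal ((1 + ‖v‖) ^ p * Real.exp (-β * ‖v‖ ^ 2)) ∂μ < ∞ := by
  set r : ℝ := Module.finrank ℝ E + 1
  have hbound : ∀ v : E, (1 + ‖v‖) ^ p * Real.exp (-β * ‖v‖ ^ 2) ≤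
      Real.exp ((p + r) ^ 2 / (4 * β)) * (1 + ‖v‖) ^ (-r) := by
    intro v
    have h1 : (0 : ℝ) < 1 + ‖v‖ := by positivity
    calc (1 + ‖v‖) ^ p * Real.exp (-β * ‖v‖ ^ 2)
        = (1 + ‖v‖) ^ (p + r) * Real.exp (-β * ‖v‖ ^ 2) * (1 + ‖v‖) ^ (-r) := by
          rw [Real.rpow_add h1, Real.rpow_neg h1.le]
          field_simp
      _ ≤ _ := by
          gcongr
          exact one_add_rpow_mul_exp_neg_mul_sq_le (by positivity) hβ (norm_nonneg v)
  calc _ ≤ ∫⁻ v, ENNReal.ofReal (Real.exp ((p + r) ^ 2 / (4 * β)) * (1 + ‖v‖) ^ (-r)) ∂μ :=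
        lintegral_mono fun v => ENNReal.ofReal_le_ofReal (hbound v)
    _ < ∞ := ((integrable_one_add_norm (by simp [r])).const_mul _).lintegral_lt_top

theorem shiftedGaussianMoment_comparable [NormedSpace ℝ E] [Nontrivial E] [FiniteDimensional ℝ E]
    [BorelSpace E] [μ.IsAddHaarMeasure] {p β : ℝ} (hp : 0 ≤ p) (hβ : 0 < β) :
    ∃ c C : ℝ, 0 < c ∧ 0 < C ∧ ∀ u : E,
      ENNReal.ofReal c * ENNReal.ofReal ((1 + ‖u‖) ^ p) ≤ shiftedGaussianMoment μ p β u ∧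
        shiftedGaussianMoment μ p β u ≤ ENNReal.ofReal C * ENNReal.ofReal ((1 + ‖u‖) ^ p) := by
  set K := ∫⁻ v, ENNReal.ofReal ((1 + ‖v‖) ^ p * Real.exp (-β * ‖v‖ ^ 2)) ∂μ
  have hK : K ≠ ∞ := (lintegral_one_add_norm_rpow_mul_exp_neg_mul_sq_lt_top μ hp hβ).ne
  have hball : μ (closedBall 0 1) ≠ ∞ := measure_closedBall_lt_top.ne
  have hball_pos : 0 < (μ (closedBall 0 1)).toReal :=
    ENNReal.toReal_pos (measure_closedBall_pos μ 0 one_pos).ne' hball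
  refine ⟨Real.exp (-β * 9) * (μ (closedBall 0 1)).toReal, K.toReal + 1, by positivity,
    by positivity, fun u => ⟨?_, ?_⟩⟩
  · rw [ENNReal.ofReal_mul (Real.exp_nonneg _), ENNReal.ofReal_toReal hball]
    exact le_shiftedGaussianMoment μ hp hβ.le u
  · refine (shiftedGaussianMoment_le μ hp β u).trans (mul_le_mul_left ?_ _)
    exact (ENNReal.le_ofReal_iff_toReal_le hK (by positivity)).2 (by linarith)

end GaussianMoment

theorem norm_fockK (α : ℝ) (w u : ℂ) :
    ‖fockK α w u‖ = Real.exp (α / 2 * (‖u‖ ^ 2 - ‖w - u‖ ^ 2)) := by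
  rw [fockK, Complex.norm_exp]
  congr 1
  simp only [Complex.sub_re, Complex.mul_re, Complex.ofReal_re, Complex.ofReal_im,
    ← Complex.ofReal_pow, Complex.sq_norm, Complex.normSq_apply, Complex.conj_re,
    Complex.conj_im, Complex.sub_im, Complex.mul_im]
  ring

theorem norm_fockK_rpow (α p : ℝ) (w u : ℂ) :
    ‖fockK α w u‖ ^ p =
      Real.exp (p * α / 2 * ‖u‖ ^ 2) * Real.exp (-(p * α / 2) * ‖w - u‖ ^ 2) := by
  rw [norm_fockK, ← Real.exp_mul, ← Real.exp_add]
  ring_nf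

theorem lintegral_norm_rpow_mul_norm_fockK_rpow (α p : ℝ) (u : ℂ) :
    ∫⁻ w : ℂ, ENNReal.ofReal (‖w‖ ^ p * ‖fockK α w u‖ ^ p) =
      ENNReal.ofReal (Real.exp (p * α / 2 * ‖u‖ ^ 2)) *
        shiftedGaussianMoment volume p (p * α / 2) u := by
  rw [shiftedGaussianMoment, ← lintegral_const_mul' _ _ ENNReal.ofReal_ne_top,
    ← lintegral_add_right_eq_self (fun w => ENNReal.ofReal (‖w‖ ^ p * ‖fockK α w u‖ ^ p)) u]
  refine lintegral_congr fun v => ?_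
  rw [norm_fockK_rpow, add_sub_cancel_right, ← ENNReal.ofReal_mul (Real.exp_nonneg _)]
  ring_nf

theorem lintegral_lintegral_fockK_Qfun (α p : ℝ) {g ψ : ℂ → ℂ} (hg : Measurable g)
    (hψ : Measurable ψ) :
    ∫⁻ w : ℂ, ∫⁻ ζ : ℂ, ENNReal.ofReal (‖w‖ ^ p * ‖fockK α w (ψ ζ)‖ ^ p * Qfun α g ζ ^ p) =
      ∫⁻ ζ : ℂ, shiftedGaussianMoment volume p (p * α / 2) (ψ ζ) *
        (ENNReal.ofReal (Real.exp (p * α / 2 * ‖ψ ζ‖ ^ 2)) * ENNReal.ofReal (Qfun α g ζ ^ p)) := by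
  have hF : Measurable fun q : ℂ × ℂ =>
      ENNReal.ofReal (‖q.1‖ ^ p * ‖fockK α q.1 (ψ q.2)‖ ^ p * Qfun α g q.2 ^ p) := by
    unfold fockK Qfun
    fun_prop
  rw [lintegral_lintegral_swap hF.aemeasurable]
  refine lintegral_congr fun ζ => ?_
  have hQ : 0 ≤ Qfun α g ζ ^ p := Real.rpow_nonneg (by unfold Qfun; positivity) _
  simp_rw [ENNReal.ofReal_mul' hQ]
  rw [lintegral_mul_const' _ _ ENNReal.ofReal_ne_top, lintegral_norm_rpow_mul_norm_fockK_rpow]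
  ring

theorem ofReal_J_integrand_eq (α p : ℝ) (g : ℂ → ℂ) (z u : ℂ) :
    ENNReal.ofReal (‖g z‖ ^ p * (1 + ‖u‖) ^ p / (1 + ‖z‖) ^ p *
        Real.exp (p * α / 2 * (‖u‖ ^ 2 - ‖z‖ ^ 2))) =
      ENNReal.ofReal ((1 + ‖u‖) ^ p) *
        (ENNReal.ofReal (Real.exp (p * α / 2 * ‖u‖ ^ 2)) * ENNReal.ofReal (Qfun α g z ^ p)) := by
  have hz : (0 : ℝ) < 1 + ‖z‖ := by positivity
  have hexp : Real.exp (-(α / 2) * ‖z‖ ^ 2 * p) = (Real.exp (p * α / 2 * ‖z‖ ^ 2))⁻¹ := by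
    rw [← Real.exp_neg]; ring_nf
  rw [← ENNReal.ofReal_mul (Real.exp_nonneg _), ← ENNReal.ofReal_mul (by positivity), Qfun,
    Real.div_rpow (by positivity) hz.le, Real.mul_rpow (norm_nonneg _) (Real.exp_nonneg _),
    ← Real.exp_mul, hexp, mul_sub, Real.exp_sub]
  congr 1
  field_simp

theorem double_integral_two_sided_estimate (α : ℝ) (hα : 0 < α) (p : ℝ) (hp : 0 < p) :
    ∃ c C : ℝ, 0 < c ∧ 0 < C ∧ ∀ g ψ : ℂ → ℂ,
      Differentiable ℂ g → Differentiable ℂ ψ →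
      (ENNReal.ofReal c *
          ∫⁻ ζ : ℂ, ENNReal.ofReal
            (‖g ζ‖ ^ p * (1 + ‖ψ ζ‖) ^ p /
              (1 + ‖ζ‖) ^ p *
                Real.exp (p * α / 2 *
                  (‖ψ ζ‖ ^ 2 - ‖ζ‖ ^ 2)))) ≤
        (∫⁻ w : ℂ, ∫⁻ ζ : ℂ, ENNReal.ofReal
            (‖w‖ ^ p * ‖fockK α w (ψ ζ)‖ ^ p *
              Qfun α g ζ ^ p)) ∧
      (∫⁻ w : ℂ, ∫⁻ ζ : ℂ, ENNReal.ofReal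
          (‖w‖ ^ p * ‖fockK α w (ψ ζ)‖ ^ p *
            Qfun α g ζ ^ p)) ≤
        ENNReal.ofReal C *
          ∫⁻ ζ : ℂ, ENNReal.ofReal
            (‖g ζ‖ ^ p * (1 + ‖ψ ζ‖) ^ p /
              (1 + ‖ζ‖) ^ p *
                Real.exp (p * α / 2 *
                  (‖ψ ζ‖ ^ 2 - ‖ζ‖ ^ 2))) := by
  obtain ⟨c, C, hc, hC, hM⟩ :=
    shiftedGaussianMoment_comparable (volume : Measure ℂ) hp.le (by positivity : 0 < p * α / 2)
  refine ⟨c, C, hc, hC, fun g ψ hg hψ => ?_⟩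
  simp_rw [lintegral_lintegral_fockK_Qfun α p hg.continuous.measurable hψ.continuous.measurable,
    ofReal_J_integrand_eq, ← lintegral_const_mul' _ _ ENNReal.ofReal_ne_top]
  constructor <;> refine lintegral_mono fun ζ => ?_
  · rw [← mul_assoc]
    exact mul_le_mul_left (hM (ψ ζ)).1 _
  · rw [← mul_assoc (ENNReal.ofReal C)]
    exact mul_le_mul_left (hM (ψ ζ)).2 _
end
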